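/- Let S and T be semirings, L a right S-semimodule, K a (T,S)-bisemimodule and Q a right T-semimodule. If Q is mono-flat as a right T-semimodule (i.e., for every injective morphism of left T-semimodules f : X → Y, the induced map Q ⊗_T X → Q ⊗_T Y is injective) and L is a finitely generated right S-semimodule, then the canonical map υ : Q ⊗_T Hom_S(L, K) → Hom_S(L, Q ⊗_T K), q ⊗ h ↦ (l ↦ q ⊗ h(l)), is injective. -/

import Mathlib

/-!
STATEMENT 2: Let `S` and `T` be (not necessarily commutative) semirings, `L` a
right `S`-semimodule, `K` a `(T,S)`-bisemimodule and `Q` a right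
`T`-semimodule.  If `Q` is mono-flat (the functor `Q ⊗_T -` preserves
injective maps of left `T`-semimodules) and `L` is finitely generated, then
the canonical map `υ : Q ⊗_T Hom_S(L,K) → Hom_S(L, Q ⊗_T K)`,
`q ⊗ h ↦ (l ↦ q ⊗ h l)`, is injective.

Since Mathlib has no tensor product over a noncommutative semiring, we
construct the balanced tensor product `Q ⊗_T K` as the quotient of the
ℕ-tensor product `Q ⊗[ℕ] K` by the additive congruence generated by
`(q·t) ⊗ k ∼ q ⊗ (t·k)`.  Right semimodules are realized as modules over the
opposite semiring.
-/

open TensorProduct MulOpposite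

section Balanced

variable (T : Type*) [Semiring T]
variable (Q : Type*) [AddCommMonoid Q] [Module Tᵐᵒᵖ Q]

/-- The additive congruence on `Q ⊗[ℕ] K` identifying `(q·t) ⊗ k` with
`q ⊗ (t·k)`. -/
def balancedCon (K : Type*) [AddCommMonoid K] [Module T K] : AddCon (Q ⊗[ℕ] K) :=
  addConGen fun x y => ∃ (q : Q) (t : T) (k : K),
    x = (op t • q) ⊗ₜ[ℕ] k ∧ y = q ⊗ₜ[ℕ] (t • k)

/-- The balanced tensor product `Q ⊗_T K` of a right `T`-semimodule `Q` and a
left `T`-semimodule `K`. -/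
abbrev BalancedTensor (K : Type*) [AddCommMonoid K] [Module T K] : Type _ :=
  (balancedCon T Q K).Quotient

/-- The map `Q ⊗_T X → Q ⊗_T Y` induced by a `T`-linear map `f : X → Y`. -/
noncomputable def balancedCongr {X Y : Type*} [AddCommMonoid X] [Module T X]
    [AddCommMonoid Y] [Module T Y] (f : X →ₗ[T] Y) :
    BalancedTensor T Q X →+ BalancedTensor T Q Y :=
  AddCon.lift _
    ((AddCon.mk' (balancedCon T Q Y)).comp
      (LinearMap.lTensor Q f.toAddMonoidHom.toNatLinearMap).toAddMonoidHom) <| by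
    refine AddCon.addConGen_le.2 ?_
    rintro x y ⟨q, t, k, rfl, rfl⟩
    show (AddCon.mk' (balancedCon T Q Y))
        (LinearMap.lTensor Q f.toAddMonoidHom.toNatLinearMap ((op t • q) ⊗ₜ[ℕ] k)) =
      (AddCon.mk' (balancedCon T Q Y))
        (LinearMap.lTensor Q f.toAddMonoidHom.toNatLinearMap (q ⊗ₜ[ℕ] (t • k)))
    rw [LinearMap.lTensor_tmul, LinearMap.lTensor_tmul]
    refine (AddCon.eq _).2 ?_
    exact AddConGen.Rel.of _ _
      ⟨q, t, f k, rfl, congrArg (fun z => q ⊗ₜ[ℕ] z) (f.map_smul t k)⟩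

end Balanced

section Upsilon

variable (T : Type*) [Semiring T] (S : Type*) [Semiring S]
variable (Q : Type*) [AddCommMonoid Q] [Module Tᵐᵒᵖ Q]
variable (L : Type*) [AddCommMonoid L] [Module Sᵐᵒᵖ L]
variable (K : Type*) [AddCommMonoid K] [Module T K] [Module Sᵐᵒᵖ K]
  [SMulCommClass Sᵐᵒᵖ T K]

/-- The canonical map `υ : Q ⊗_T Hom_S(L,K) → (L → Q ⊗_T K)`,
`q ⊗ h ↦ (l ↦ q ⊗ h l)`.  (Its values are in fact right `S`-linear, so this
is the canonical map `Q ⊗_T Hom_S(L,K) → Hom_S(L, Q ⊗_T K)`.) -/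
noncomputable def upsilonFun :
    BalancedTensor T Q (L →ₗ[Sᵐᵒᵖ] K) →+ (L → BalancedTensor T Q K) :=
  AddCon.lift _
    (TensorProduct.liftAddHom
      { toFun := fun q =>
          { toFun := fun h l => (balancedCon T Q K).mk' (q ⊗ₜ[ℕ] h l)
            map_zero' := by
              funext l
              simp only [LinearMap.zero_apply, tmul_zero, map_zero, Pi.zero_apply]
            map_add' := fun h h' => by
              funext l
              simp only [LinearMap.add_apply, tmul_add, map_add, Pi.add_apply] }
        map_zero' := by
          refine AddMonoidHom.ext fun h => ?_
          funext l
          simp only [AddMonoidHom.coe_mk, ZeroHom.coe_mk, zero_tmul, map_zero,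
            AddMonoidHom.zero_apply, Pi.zero_apply]
        map_add' := fun q q' => by
          refine AddMonoidHom.ext fun h => ?_
          funext l
          simp only [AddMonoidHom.coe_mk, ZeroHom.coe_mk, add_tmul, map_add,
            AddMonoidHom.add_apply, Pi.add_apply] }
      (fun r q h => by
        funext l
        simp only [AddMonoidHom.coe_mk, ZeroHom.coe_mk, LinearMap.smul_apply,
          smul_tmul])) <| by
    refine AddCon.addConGen_le.2 ?_
    rintro x y ⟨q, t, h, rfl, rfl⟩
    show _ = _
    rw [TensorProduct.liftAddHom_tmul, TensorProduct.liftAddHom_tmul]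
    funext l
    refine (AddCon.eq _).2 ?_
    exact AddConGen.Rel.of _ _ ⟨q, t, h l, rfl, rfl⟩

end Upsilon

/-!
Choose generators `l₁, …, lₙ` of `L`. Evaluation at them embeds `Hom_S(L, K)` into `Kⁿ`, so by
mono-flatness `Q ⊗_T Hom_S(L, K)` embeds into `Q ⊗_T Kⁿ`. As `Q ⊗_T -` is additive, an element of
`Q ⊗_T Kⁿ` is determined by its `n` components in `Q ⊗_T K`, and the `i`-th component of the
image of `z` is `υ z lᵢ`.
-/

section BalancedTensor

variable {T : Type*} [Semiring T] {Q : Type*} [AddCommMonoid Q] [Module Tᵐᵒᵖ Q]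
variable {X Y Z : Type*} [AddCommMonoid X] [Module T X] [AddCommMonoid Y] [Module T Y]
  [AddCommMonoid Z] [Module T Z]

theorem BalancedTensor.hom_ext {A : Type*} [AddCommMonoid A]
    {f g : BalancedTensor T Q X →+ A}
    (h : ∀ (q : Q) (x : X), f ↑(q ⊗ₜ[ℕ] x : Q ⊗[ℕ] X) = g ↑(q ⊗ₜ[ℕ] x : Q ⊗[ℕ] X)) :
    f = g :=
  AddCon.hom_ext <| AddMonoidHom.toNatLinearMap_injective <| TensorProduct.ext' h

@[simp]
theorem balancedCongr_mk_tmul (f : X →ₗ[T] Y) (q : Q) (x : X) :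
    balancedCongr T Q f ↑(q ⊗ₜ[ℕ] x : Q ⊗[ℕ] X) = ↑(q ⊗ₜ[ℕ] f x : Q ⊗[ℕ] Y) :=
  rfl

theorem balancedCongr_id : balancedCongr T Q (LinearMap.id : X →ₗ[T] X) = AddMonoidHom.id _ :=
  BalancedTensor.hom_ext fun _ _ => rfl

theorem balancedCongr_comp (g : Y →ₗ[T] Z) (f : X →ₗ[T] Y) :
    balancedCongr T Q (g ∘ₗ f) = (balancedCongr T Q g).comp (balancedCongr T Q f) :=
  BalancedTensor.hom_ext fun _ _ => rfl

variable (T Q X Y) in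
noncomputable def balancedCongrAddHom :
    (X →ₗ[T] Y) →+ (BalancedTensor T Q X →+ BalancedTensor T Q Y) where
  toFun := balancedCongr T Q
  map_zero' := BalancedTensor.hom_ext fun q x => by simp
  map_add' f g := BalancedTensor.hom_ext fun q x => by simp [tmul_add]

theorem balancedCongr_sum {ι : Type*} (s : Finset ι) (f : ι → X →ₗ[T] Y) :
    balancedCongr T Q (∑ i ∈ s, f i) = ∑ i ∈ s, balancedCongr T Q (f i) :=
  map_sum (balancedCongrAddHom T Q X Y) f s

theorem balancedCongr_jointly_injective {ι : Type*} [Fintype ι] {Y : ι → Type*}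
    [∀ i, AddCommMonoid (Y i)] [∀ i, Module T (Y i)] (p : ∀ i, X →ₗ[T] Y i)
    (s : ∀ i, Y i →ₗ[T] X) (hps : ∑ i, s i ∘ₗ p i = LinearMap.id)
    {z w : BalancedTensor T Q X}
    (h : ∀ i, balancedCongr T Q (p i) z = balancedCongr T Q (p i) w) :
    z = w := by
  have key : ∀ z, ∑ i, balancedCongr T Q (s i) (balancedCongr T Q (p i) z) = z := fun z => by
    simpa only [balancedCongr_sum, AddMonoidHom.finsetSum_apply, balancedCongr_comp,
      AddMonoidHom.comp_apply, balancedCongr_id, AddMonoidHom.id_apply] using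
      DFunLike.congr_fun (congrArg (balancedCongr T Q) hps) z
  rw [← key z, ← key w]
  simp only [h]

end BalancedTensor

theorem balancedCongr_applyₗ'_eq_upsilonFun {T S Q L K : Type*} [Semiring T] [Semiring S]
    [AddCommMonoid Q] [Module Tᵐᵒᵖ Q] [AddCommMonoid L] [Module Sᵐᵒᵖ L]
    [AddCommMonoid K] [Module T K] [Module Sᵐᵒᵖ K] [SMulCommClass Sᵐᵒᵖ T K]
    (l : L) (z : BalancedTensor T Q (L →ₗ[Sᵐᵒᵖ] K)) :
    balancedCongr T Q (LinearMap.applyₗ' T l) z = upsilonFun T S Q L K z l :=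
  DFunLike.congr_fun (BalancedTensor.hom_ext (f := balancedCongr T Q (LinearMap.applyₗ' T l))
    (g := (Pi.evalAddMonoidHom _ l).comp (upsilonFun T S Q L K)) fun _ _ => rfl) z

universe u v w x y

theorem upsilon_injective_of_monoflat_of_fg
    (T : Type u) [Semiring T] (S : Type v) [Semiring S]
    (L : Type w) [AddCommMonoid L] [Module Sᵐᵒᵖ L]
    (K : Type x) [AddCommMonoid K] [Module T K] [Module Sᵐᵒᵖ K]
    [SMulCommClass Sᵐᵒᵖ T K]
    (Q : Type y) [AddCommMonoid Q] [Module Tᵐᵒᵖ Q]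
    -- `Q` is a mono-flat right `T`-semimodule
    (hQ : ∀ (X Y : Type (max w x)) [AddCommMonoid X] [Module T X]
      [AddCommMonoid Y] [Module T Y] (f : X →ₗ[T] Y),
      Function.Injective f → Function.Injective (balancedCongr T Q f))
    -- `L` is a finitely generated right `S`-semimodule
    (hL : Module.Finite Sᵐᵒᵖ L) :
    Function.Injective (upsilonFun T S Q L K) := by
  obtain ⟨n, l, hl⟩ := Module.Finite.exists_fin (R := Sᵐᵒᵖ) (M := L)
  -- lifted to the universe in which mono-flatness is assumed
  let up : K ≃ₗ[T] ULift.{max w x} K := ULift.moduleEquiv.symm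
  let p (i : Fin n) : (Fin n → ULift.{max w x} K) →ₗ[T] K := up.symm.toLinearMap ∘ₗ .proj i
  let s (i : Fin n) : K →ₗ[T] (Fin n → ULift.{max w x} K) := .single T _ i ∘ₗ up.toLinearMap
  have hps : ∑ i, s i ∘ₗ p i = LinearMap.id := by
    ext k i j
    simp [s, p, Pi.single_apply, eq_comm]
  let e : (L →ₗ[Sᵐᵒᵖ] K) →ₗ[T] (Fin n → ULift.{max w x} K) :=
    .pi fun i => up.toLinearMap ∘ₗ LinearMap.applyₗ' T (l i)
  have he : Function.Injective e := fun h h' hyp =>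
    LinearMap.ext_on_range hl fun i => up.injective (congrFun hyp i)
  have hpe (i : Fin n) : p i ∘ₗ e = LinearMap.applyₗ' T (l i) := rfl
  intro a b hab
  refine hQ _ _ e he (balancedCongr_jointly_injective p s hps fun i => ?_)
  simp only [← AddMonoidHom.comp_apply, ← balancedCongr_comp, hpe,
    balancedCongr_applyₗ'_eq_upsilonFun, hab]
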